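/- There exists an absolute constant C > 0 such that for every probability distribution J on [0,1] × {0,1}, every valid post-processing class K, and every interval I ⊆ [0,1] (open, closed, half-open, or a singleton): | E_{(p,y)~J}[ 1[p ∈ I]·(y − p) ] | ≤ C·√(CDL_K(J)). -/

import Mathlib

/-!
Shifting every prediction by `t` is an admissible post-processing. Against the V-shaped proper
loss with kink `v` its gain is `2·E[1{p ∈ (v - t, v]}·(y - v)]`; shifting by `-t` against the kink
`u = v - t` gives `-2·E[1{p ∈ (u, v]}·(y - u)]`. On that bin `y - p` is within `v - u` of both
`y - v` and `y - u`, so a bin of width `w` has calibration error at most `CDL/2 + w·mass` in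
absolute value. Cutting `(a, b]` into `N ≈ 1/√CDL` bins gives `3·√CDL`. An interval differs from
`(inf I, sup I]` by at most its two endpoints, and a point is the limit of shrinking bins, whose
bound tends to `CDL/2`.
-/

open MeasureTheory Set

noncomputable section

/-- Expected loss of prediction `p` when the outcome is `y ~ Bernoulli(q)`:
`ℓ(p,q) = q·ℓ(p,1) + (1−q)·ℓ(p,0)`. -/
def elos (ℓ : ℝ → ℝ → ℝ) (p q : ℝ) : ℝ := q * ℓ p 1 + (1 - q) * ℓ p 0

/-- A loss is proper if truthful prediction minimizes expected loss. -/
def IsProper (ℓ : ℝ → ℝ → ℝ) : Prop :=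
  ∀ p ∈ Icc (0:ℝ) 1, ∀ q ∈ Icc (0:ℝ) 1, elos ℓ q q ≤ elos ℓ p q

/-- The class `L*` of proper losses with `|ℓ(p,1) − ℓ(p,0)| ≤ 1`. -/
def Lstar (ℓ : ℝ → ℝ → ℝ) : Prop :=
  IsProper ℓ ∧ ∀ p ∈ Icc (0:ℝ) 1, |ℓ p 1 - ℓ p 0| ≤ 1

/-- Projection onto `[0,1]`. -/
def proj01 (x : ℝ) : ℝ := max 0 (min 1 x)

/-- Calibration decision loss of `J` relative to the post-processing class `K`:
`sup` over `ℓ ∈ L*` and `κ ∈ K` of `E[ℓ(p,y) − ℓ(κ(p),y)]`. -/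
def CDL (K : Set (ℝ → ℝ)) (J : Measure (ℝ × ℝ)) : ℝ :=
  sSup { x | ∃ ℓ κ, Lstar ℓ ∧ κ ∈ K ∧
    x = ∫ z, (ℓ z.1 z.2 - ℓ (κ z.1) z.2) ∂J }

/-- `sign_s(t)`: `+1` if `t > 0`, `−1` if `t < 0`, and `s` if `t = 0`. -/
def signS (s t : ℝ) : ℝ := if 0 < t then 1 else if t < 0 then -1 else s

/-- `sign₊ = sign_{+1}`. -/
def signP (t : ℝ) : ℝ := signS 1 t

/-- The V-shaped loss `ℓ_{v,s}(p,y) = −sign_s(p−v)·(y−v)`. -/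
def vloss (v s : ℝ) : ℝ → ℝ → ℝ := fun p y => -(signS s (p - v)) * (y - v)

/-- A valid post-processing class: maps `[0,1]` to `[0,1]`, contains the identity, and
is translation invariant. -/
def ValidClass (K : Set (ℝ → ℝ)) : Prop :=
  (∀ κ ∈ K, ∀ p ∈ Icc (0:ℝ) 1, κ p ∈ Icc (0:ℝ) 1) ∧
  ((fun p : ℝ => p) ∈ K) ∧
  (∀ s t : ℝ, ∀ κ ∈ K, (fun p : ℝ => proj01 (κ (proj01 (p + s)) + t)) ∈ K)

/-- Upper thresholds of a post-processing class. -/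
def thr (K : Set (ℝ → ℝ)) : Set (ℝ → ℝ) :=
  { w | ∃ κ ∈ K, w = fun p => signP (κ p - 1/2) }

/-- Modified thresholds: `thr(K)` together with all lower thresholds of the identity. -/
def thr' (K : Set (ℝ → ℝ)) : Set (ℝ → ℝ) :=
  thr K ∪ { w | ∃ v : ℝ, w = fun p => -signP (p - v) }

/-- Weight-restricted calibration error `CE_W(J) = sup_{w ∈ W} E[w(p)(y − p)]`. -/
def CE (W : Set (ℝ → ℝ)) (J : Measure (ℝ × ℝ)) : ℝ :=
  sSup { x | ∃ w ∈ W, x = ∫ z, w z.1 * (z.2 - z.1) ∂J }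

/-- A probability distribution on `[0,1] × {0,1}`. -/
def IsPredDist (J : Measure (ℝ × ℝ)) : Prop :=
  IsProbabilityMeasure J ∧ ∀ᵐ z ∂J, z.1 ∈ Icc (0:ℝ) 1 ∧ (z.2 = 0 ∨ z.2 = 1)

/-- The class `M₊` of nondecreasing post-processings `[0,1] → [0,1]`. -/
def Mplus : Set (ℝ → ℝ) :=
  { κ | (∀ p ∈ Icc (0:ℝ) 1, κ p ∈ Icc (0:ℝ) 1) ∧ MonotoneOn κ (Icc (0:ℝ) 1) }

open Filter Topology

lemma signS_neg_one (x : ℝ) : signS (-1) x = if 0 < x then 1 else -1 := by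
  unfold signS; split_ifs <;> rfl

lemma abs_signS_le {s : ℝ} (hs : |s| ≤ 1) (t : ℝ) : |signS s t| ≤ 1 := by
  unfold signS; split_ifs <;> simp [hs]

lemma signS_mul_self (s t : ℝ) : signS s t * t = |t| := by
  unfold signS
  split_ifs with h₁ h₂
  · rw [abs_of_pos h₁, one_mul]
  · rw [abs_of_neg h₂, neg_one_mul]
  · rw [le_antisymm (not_lt.1 h₁) (not_lt.1 h₂), mul_zero, abs_zero]

lemma elos_vloss (v s p q : ℝ) : elos (vloss v s) p q = -signS s (p - v) * (q - v) := by
  simp only [elos, vloss]; ring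

lemma vloss_mem_Lstar (v : ℝ) {s : ℝ} (hs : |s| ≤ 1) : Lstar (vloss v s) := by
  refine ⟨fun p _ q _ => ?_, fun p _ => ?_⟩
  · have h : signS s (p - v) * (q - v) ≤ |q - v| :=
      (le_abs_self _).trans <| by
        rw [abs_mul]; exact mul_le_of_le_one_left (abs_nonneg _) (abs_signS_le hs _)
    rw [elos_vloss, elos_vloss, neg_mul, signS_mul_self]
    linarith
  · have : vloss v s p 1 - vloss v s p 0 = -signS s (p - v) := by simp only [vloss]; ring
    rw [this, abs_neg]
    exact abs_signS_le hs _

lemma elos_sub_elos (ℓ : ℝ → ℝ → ℝ) (p q q' : ℝ) :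
    elos ℓ p q - elos ℓ p q' = (q - q') * (ℓ p 1 - ℓ p 0) := by
  simp only [elos]; ring

lemma elos_eq_of_eq_zero_or_one (ℓ : ℝ → ℝ → ℝ) (p : ℝ) {y : ℝ} (hy : y = 0 ∨ y = 1) :
    elos ℓ p y = ℓ p y := by
  rcases hy with rfl | rfl <;> simp only [elos] <;> ring

namespace Lstar

variable {ℓ : ℝ → ℝ → ℝ}

lemma elos_sub_elos_le (hℓ : Lstar ℓ) {p q q' : ℝ} (hp : p ∈ Icc (0:ℝ) 1) (hq : q ∈ Icc (0:ℝ) 1)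
    (hq' : q' ∈ Icc (0:ℝ) 1) : elos ℓ p q - elos ℓ p q' ≤ 1 := by
  have hqq' : |q - q'| ≤ 1 :=
    abs_sub_le_iff.2 ⟨by linarith [hq.2, hq'.1], by linarith [hq.1, hq'.2]⟩
  rw [elos_sub_elos]
  exact (le_abs_self _).trans <| by rw [abs_mul]; exact mul_le_one₀ hqq' (abs_nonneg _) (hℓ.2 p hp)

/-- Properness at `y` and at `p`, and the slope bound twice, in
`ℓ(p,y) - ℓ(q,y) ≤ [ℓ(p,y) - ℓ(p,p)] + [ℓ(p,p) - ℓ(y,p)] + [ℓ(y,p) - ℓ(y,y)]`. -/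
lemma elos_sub_le_two (hℓ : Lstar ℓ) {p q y : ℝ} (hp : p ∈ Icc (0:ℝ) 1) (hq : q ∈ Icc (0:ℝ) 1)
    (hy : y ∈ Icc (0:ℝ) 1) : elos ℓ p y - elos ℓ q y ≤ 2 := by
  have := hℓ.1 q hq y hy
  have := hℓ.1 y hy p hp
  have := hℓ.elos_sub_elos_le hp hy hp
  have := hℓ.elos_sub_elos_le hy hp hy
  linarith

end Lstar

lemma proj01_mem (x : ℝ) : proj01 x ∈ Icc (0:ℝ) 1 :=
  ⟨le_max_left _ _, max_le zero_le_one (min_le_left _ _)⟩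

lemma proj01_eq_self {x : ℝ} (hx : x ∈ Icc (0:ℝ) 1) : proj01 x = x := by
  rw [proj01, min_eq_right hx.2, max_eq_right hx.1]

lemma lt_proj01_iff {v x : ℝ} (hv₀ : 0 ≤ v) (hv₁ : v < 1) : v < proj01 x ↔ v < x := by
  simp [proj01, hv₁, not_lt.2 hv₀]

lemma signS_shift_right_sub {u v : ℝ} (hv₀ : 0 ≤ v) (hv₁ : v < 1) (huv : u ≤ v) (p : ℝ) :
    signS (-1) (proj01 (p + (v - u)) - v) - signS (-1) (p - v)
      = 2 * (Ioc u v).indicator (fun _ => (1:ℝ)) p := by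
  simp only [signS_neg_one, sub_pos, lt_proj01_iff hv₀ hv₁, indicator, mem_Ioc]
  split_ifs <;> grind

lemma signS_shift_left_sub {u v : ℝ} (hu₀ : 0 ≤ u) (hu₁ : u < 1) (huv : u ≤ v) (p : ℝ) :
    signS (-1) (proj01 (p + (u - v)) - u) - signS (-1) (p - u)
      = -2 * (Ioc u v).indicator (fun _ => (1:ℝ)) p := by
  simp only [signS_neg_one, sub_pos, lt_proj01_iff hu₀ hu₁, indicator, mem_Ioc]
  split_ifs <;> grind

lemma ValidClass.shift_mem {K : Set (ℝ → ℝ)} (hK : ValidClass K) (t : ℝ) :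
    (fun p => proj01 (p + t)) ∈ K := by
  simpa [proj01_eq_self (proj01_mem _)] using hK.2.2 t 0 _ hK.2.1

lemma integral_indicator_fst_mul {α β : Type*} [MeasurableSpace α] [MeasurableSpace β]
    {μ : Measure (α × β)} {B : Set α} (hB : MeasurableSet B) (f : α × β → ℝ) :
    ∫ z, B.indicator (fun _ => (1:ℝ)) z.1 * f z ∂μ = ∫ z in Prod.fst ⁻¹' B, f z ∂μ := by
  rw [← integral_indicator (measurable_fst hB)]
  congr 1 with z
  by_cases h : z.1 ∈ B <;> simp [h]

lemma iInter_Ioc_sub_one_div_add_one (v : ℝ) : ⋂ n : ℕ, Ioc (v - 1 / (n + 1)) v = {v} := by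
  refine Subset.antisymm (fun x hx => ?_) fun x hx => ?_
  · replace hx : ∀ n : ℕ, v - 1 / (n + 1) < x ∧ x ≤ v := by simpa using hx
    refine le_antisymm (hx 0).2 (le_of_forall_pos_lt_add fun ε hε => ?_)
    obtain ⟨n, hn⟩ := exists_nat_one_div_lt hε
    linarith [(hx n).1]
  · rw [mem_singleton_iff.1 hx, mem_iInter]
    exact fun n => ⟨sub_lt_self _ Nat.one_div_pos_of_nat, le_rfl⟩

lemma Set.OrdConnected.union_singleton_csSup_eq {α : Type*} [ConditionallyCompleteLinearOrder α]
    {I : Set α} (hI : I.OrdConnected) (hne : I.Nonempty) (hbb : BddBelow I) (hba : BddAbove I) :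
    I ∪ {sSup I} = Ioc (sInf I) (sSup I) ∪ (I ∩ {sInf I}) := by
  have hIcc : ∀ x ∈ I, sInf I ≤ x ∧ x ≤ sSup I := fun x hx => ⟨csInf_le hbb hx, le_csSup hba hx⟩
  have hIoo : ∀ x, sInf I < x → x < sSup I → x ∈ I := fun x h₁ h₂ => by
    obtain ⟨y, hy, hyx⟩ := exists_lt_of_csInf_lt hne h₁
    obtain ⟨z, hz, hxz⟩ := exists_lt_of_lt_csSup hne h₂
    exact hI.out hy hz ⟨hyx.le, hxz.le⟩
  ext x
  simp only [mem_union, mem_singleton_iff, mem_Ioc, mem_inter_iff]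
  constructor
  · rintro (hx | rfl)
    · rcases (hIcc x hx).1.eq_or_lt with h | h
      · exact Or.inr ⟨hx, h.symm⟩
      · exact Or.inl ⟨h, (hIcc x hx).2⟩
    · rcases (csInf_le_csSup hne hbb hba).eq_or_lt with h | h
      · obtain ⟨y, hy⟩ := hne
        have hy' : y = sSup I := le_antisymm (hIcc y hy).2 (h ▸ (hIcc y hy).1)
        exact Or.inr ⟨hy' ▸ hy, h.symm⟩
      · exact Or.inl ⟨h, le_rfl⟩
  · rintro (⟨h₁, h₂⟩ | ⟨hx, -⟩)
    · rcases h₂.lt_or_eq with h₂ | h₂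
      · exact Or.inl (hIoo x h₁ h₂)
      · exact Or.inr h₂
    · exact Or.inl hx

lemma setIntegral_preimage_fst_ordConnected {β : Type*} [MeasurableSpace β]
    {μ : Measure (ℝ × β)} {f : ℝ × β → ℝ} (hf : Integrable f μ) {I : Set ℝ}
    (hI : I.OrdConnected) (hne : I.Nonempty) (hbb : BddBelow I) (hba : BddAbove I) :
    ∫ z in Prod.fst ⁻¹' I, f z ∂μ
      = ∫ z in Prod.fst ⁻¹' Ioc (sInf I) (sSup I), f z ∂μ
        + ∫ z in Prod.fst ⁻¹' (I ∩ {sInf I}), f z ∂μ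
        - ∫ z in Prod.fst ⁻¹' ({sSup I} \ I), f z ∂μ := by
  have h : ∫ z in Prod.fst ⁻¹' (I ∪ {sSup I}), f z ∂μ
      = ∫ z in Prod.fst ⁻¹' (Ioc (sInf I) (sSup I) ∪ (I ∩ {sInf I})), f z ∂μ := by
    rw [hI.union_singleton_csSup_eq hne hbb hba]
  have hdisj : Disjoint (Ioc (sInf I) (sSup I)) (I ∩ {sInf I}) :=
    disjoint_left.2 fun x hx hx' => hx.1.ne' hx'.2
  rw [← union_sdiff_self, preimage_union, preimage_union,
    setIntegral_union (disjoint_sdiff_right.preimage _)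
      (measurable_fst (measurableSet_singleton _ |>.diff hI.measurableSet))
      hf.integrableOn hf.integrableOn,
    setIntegral_union (hdisj.preimage _)
      (measurable_fst (hI.measurableSet.inter (measurableSet_singleton _)))
      hf.integrableOn hf.integrableOn] at h
  linarith

lemma le_three_mul_sqrt_of_forall_nat {x d : ℝ} (hd₀ : 0 ≤ d) (hd₁ : d ≤ 1)
    (h : ∀ N : ℕ, 0 < N → x ≤ N * d + 1 / N) : x ≤ 3 * √d := by
  rcases hd₀.eq_or_lt with rfl | hd
  · rw [Real.sqrt_zero, mul_zero]
    refine le_of_forall_pos_lt_add fun ε hε => ?_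
    obtain ⟨n, hn⟩ := exists_nat_one_div_lt hε
    have := h (n + 1) n.succ_pos
    push_cast at this
    linarith
  · have hr : 0 < √d := Real.sqrt_pos.2 hd
    have hrr : √d * √d = d := Real.mul_self_sqrt hd₀
    have hr₁ : √d ≤ 1 := Real.sqrt_le_one.2 hd₁
    set N := ⌈1 / √d⌉₊
    have hN : 0 < N := Nat.ceil_pos.2 (by positivity)
    have hN' : (0:ℝ) < N := Nat.cast_pos.2 hN
    have hNd : N * d ≤ 2 * √d := by
      have hNle : (N:ℝ) ≤ 1 / √d + 1 := (Nat.ceil_lt_add_one (by positivity)).le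
      calc N * d ≤ (1 / √d + 1) * d := by gcongr
        _ = √d + d := by rw [add_mul, one_div_mul_eq_div, Real.div_sqrt, one_mul]
        _ ≤ 2 * √d := by nlinarith
    have hN1 : 1 / (N:ℝ) ≤ √d := (one_div_le hN' hr).2 (Nat.le_ceil _)
    linarith [h N hN]

section PredictionDistribution

variable {J : Measure (ℝ × ℝ)} {K : Set (ℝ → ℝ)}

lemma IsPredDist.ae_mem_Icc (hJ : IsPredDist J) :
    ∀ᵐ z ∂J, z.1 ∈ Icc (0:ℝ) 1 ∧ z.2 ∈ Icc (0:ℝ) 1 := by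
  filter_upwards [hJ.2] with z ⟨hp, hy⟩
  exact ⟨hp, by rcases hy with h | h <;> simp [h]⟩

lemma IsPredDist.integrable_fst (hJ : IsPredDist J) : Integrable Prod.fst J := by
  have := hJ.1
  refine Integrable.of_bound measurable_fst.aestronglyMeasurable 1 ?_
  filter_upwards [hJ.ae_mem_Icc] with z hz
  rw [Real.norm_eq_abs, abs_le]
  constructor <;> linarith [hz.1.1, hz.1.2]

lemma IsPredDist.integrable_snd (hJ : IsPredDist J) : Integrable Prod.snd J := by
  have := hJ.1
  refine Integrable.of_bound measurable_snd.aestronglyMeasurable 1 ?_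
  filter_upwards [hJ.ae_mem_Icc] with z hz
  rw [Real.norm_eq_abs, abs_le]
  constructor <;> linarith [hz.2.1, hz.2.2]

lemma IsPredDist.integrable_snd_sub_fst (hJ : IsPredDist J) :
    Integrable (fun z => z.2 - z.1) J :=
  hJ.integrable_snd.sub hJ.integrable_fst

lemma integral_loss_sub_le_two (hJ : IsPredDist J) (hK : ValidClass K) {ℓ : ℝ → ℝ → ℝ}
    {κ : ℝ → ℝ} (hℓ : Lstar ℓ) (hκ : κ ∈ K) :
    ∫ z, (ℓ z.1 z.2 - ℓ (κ z.1) z.2) ∂J ≤ 2 := by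
  have := hJ.1
  by_cases hint : Integrable (fun z => ℓ z.1 z.2 - ℓ (κ z.1) z.2) J
  · calc ∫ z, (ℓ z.1 z.2 - ℓ (κ z.1) z.2) ∂J ≤ ∫ _, (2:ℝ) ∂J := by
          refine integral_mono_ae hint (integrable_const 2) ?_
          filter_upwards [hJ.2] with z ⟨hp, hy⟩
          rw [← elos_eq_of_eq_zero_or_one ℓ _ hy, ← elos_eq_of_eq_zero_or_one ℓ _ hy]
          exact hℓ.elos_sub_le_two hp (hK.1 κ hκ _ hp) (by rcases hy with h | h <;> simp [h])
      _ = 2 := by simp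
  · rw [integral_undef hint]; norm_num

lemma le_CDL (hJ : IsPredDist J) (hK : ValidClass K) {ℓ : ℝ → ℝ → ℝ} {κ : ℝ → ℝ}
    (hℓ : Lstar ℓ) (hκ : κ ∈ K) : ∫ z, (ℓ z.1 z.2 - ℓ (κ z.1) z.2) ∂J ≤ CDL K J := by
  refine le_csSup ⟨2, ?_⟩ ⟨ℓ, κ, hℓ, hκ, rfl⟩
  rintro _ ⟨ℓ, κ, hℓ, hκ, rfl⟩
  exact integral_loss_sub_le_two hJ hK hℓ hκ

lemma CDL_nonneg (hJ : IsPredDist J) (hK : ValidClass K) : 0 ≤ CDL K J := by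
  simpa using le_CDL hJ hK (vloss_mem_Lstar 0 (s := 1) (by simp)) hK.2.1

lemma CDL_le_two (hJ : IsPredDist J) (hK : ValidClass K) : CDL K J ≤ 2 := by
  refine csSup_le ⟨_, _, _, vloss_mem_Lstar 0 (s := 1) (by simp), hK.2.1, rfl⟩ ?_
  rintro _ ⟨ℓ, κ, hℓ, hκ, rfl⟩
  exact integral_loss_sub_le_two hJ hK hℓ hκ

/-- The integrand is `vloss v (-1) p y - vloss v (-1) (proj01 (p + t)) y`. -/
lemma integral_signS_shift_le_CDL (hJ : IsPredDist J) (hK : ValidClass K) (v t : ℝ) :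
    ∫ z, (signS (-1) (proj01 (z.1 + t) - v) - signS (-1) (z.1 - v)) * (z.2 - v) ∂J
      ≤ CDL K J := by
  convert le_CDL hJ hK (vloss_mem_Lstar v (s := -1) (by simp)) (hK.shift_mem t) using 3
  simp only [vloss]; ring

lemma two_mul_setIntegral_Ioc_sub_right_le_CDL (hJ : IsPredDist J) (hK : ValidClass K)
    {u v : ℝ} (hv : 0 ≤ v) (huv : u < v) :
    2 * ∫ z in Prod.fst ⁻¹' Ioc u v, (z.2 - v) ∂J ≤ CDL K J := by
  rcases lt_or_ge v 1 with hv₁ | hv₁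
  · have h := integral_signS_shift_le_CDL hJ hK v (v - u)
    simp only [signS_shift_right_sub hv hv₁ huv.le, mul_assoc, integral_const_mul] at h
    rwa [integral_indicator_fst_mul measurableSet_Ioc] at h
  · have : ∫ z in Prod.fst ⁻¹' Ioc u v, (z.2 - v) ∂J ≤ 0 := by
      refine setIntegral_nonpos_of_ae ?_
      filter_upwards [hJ.ae_mem_Icc] with z hz
      simp only [Pi.zero_apply]; linarith [hz.2.2]
    linarith [CDL_nonneg hJ hK]

lemma neg_CDL_le_two_mul_setIntegral_Ioc_sub_left (hJ : IsPredDist J) (hK : ValidClass K)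
    {u v : ℝ} (hv : v ≤ 1) (huv : u < v) :
    -CDL K J ≤ 2 * ∫ z in Prod.fst ⁻¹' Ioc u v, (z.2 - u) ∂J := by
  rcases le_or_gt 0 u with hu₀ | hu₀
  · have h := integral_signS_shift_le_CDL hJ hK u (u - v)
    simp only [signS_shift_left_sub hu₀ (huv.trans_le hv) huv.le, mul_assoc,
      integral_const_mul] at h
    rw [integral_indicator_fst_mul measurableSet_Ioc] at h
    linarith
  · have : 0 ≤ ∫ z in Prod.fst ⁻¹' Ioc u v, (z.2 - u) ∂J := by
      refine setIntegral_nonneg_of_ae ?_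
      filter_upwards [hJ.ae_mem_Icc] with z hz
      simp only [Pi.zero_apply]; linarith [hz.2.1]
    linarith [CDL_nonneg hJ hK]

lemma abs_setIntegral_sub_fst_sub_le (hJ : IsPredDist J) {S : Set (ℝ × ℝ)} {c w : ℝ}
    (hc : ∀ z ∈ S, |c - z.1| ≤ w) :
    |∫ z in S, (z.2 - z.1) ∂J - ∫ z in S, (z.2 - c) ∂J| ≤ w * J.real S := by
  have := hJ.1
  have hc' : Integrable (fun z : ℝ × ℝ => z.2 - c) J := hJ.integrable_snd.sub (integrable_const c)
  rw [← integral_sub hJ.integrable_snd_sub_fst.integrableOn hc'.integrableOn]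
  simp only [sub_sub_sub_cancel_left]
  exact norm_setIntegral_le_of_norm_le_const (f := fun z : ℝ × ℝ => c - z.1) (measure_lt_top J S) hc

lemma abs_setIntegral_Ioc_le (hJ : IsPredDist J) (hK : ValidClass K) {u v : ℝ}
    (huv : u ≤ v) (hv : v ∈ Icc (0:ℝ) 1) :
    |∫ z in Prod.fst ⁻¹' Ioc u v, (z.2 - z.1) ∂J|
      ≤ CDL K J / 2 + (v - u) * J.real (Prod.fst ⁻¹' Ioc u v) := by
  rcases huv.eq_or_lt with rfl | huv
  · have := CDL_nonneg hJ hK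
    simp only [Ioc_self, preimage_empty, Measure.restrict_empty, integral_zero_measure, abs_zero,
      sub_self, zero_mul, add_zero]
    linarith
  have hright := abs_setIntegral_sub_fst_sub_le hJ (S := Prod.fst ⁻¹' Ioc u v) (c := v)
    (w := v - u) fun z hz => by rw [abs_le]; constructor <;> linarith [hz.1, hz.2]
  have hleft := abs_setIntegral_sub_fst_sub_le hJ (S := Prod.fst ⁻¹' Ioc u v) (c := u)
    (w := v - u) fun z hz => by rw [abs_le]; constructor <;> linarith [hz.1, hz.2]
  have hA := two_mul_setIntegral_Ioc_sub_right_le_CDL hJ hK hv.1 huv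
  have hB := neg_CDL_le_two_mul_setIntegral_Ioc_sub_left hJ hK hv.2 huv
  rw [abs_le] at hright hleft ⊢
  constructor <;> linarith [hright.2, hleft.1]

lemma abs_setIntegral_Ioc_le_of_monotone (hJ : IsPredDist J) (hK : ValidClass K) {f : ℕ → ℝ}
    (hf : Monotone f) (hf₀ : 0 ≤ f 0) {δ : ℝ} (hδ : ∀ i, f (i + 1) - f i ≤ δ) (N : ℕ)
    (hN : f N ≤ 1) :
    |∫ z in Prod.fst ⁻¹' Ioc (f 0) (f N), (z.2 - z.1) ∂J|
      ≤ N * (CDL K J / 2) + δ * J.real (Prod.fst ⁻¹' Ioc (f 0) (f N)) := by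
  have := hJ.1
  induction N with
  | zero => simp
  | succ N ih =>
    have hmeas : MeasurableSet (Prod.fst ⁻¹' Ioc (f N) (f (N + 1)) : Set (ℝ × ℝ)) :=
      measurable_fst measurableSet_Ioc
    have hdisj : Disjoint (Prod.fst ⁻¹' Ioc (f 0) (f N) : Set (ℝ × ℝ))
        (Prod.fst ⁻¹' Ioc (f N) (f (N + 1))) :=
      (Ioc_disjoint_Ioc_of_le le_rfl).preimage _
    have hunion : (Prod.fst ⁻¹' Ioc (f 0) (f (N + 1)) : Set (ℝ × ℝ))
        = Prod.fst ⁻¹' Ioc (f 0) (f N) ∪ Prod.fst ⁻¹' Ioc (f N) (f (N + 1)) := by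
      rw [← preimage_union, Ioc_union_Ioc_eq_Ioc (hf N.zero_le) (hf N.le_succ)]
    have hlast := abs_setIntegral_Ioc_le hJ hK (hf N.le_succ)
      ⟨hf₀.trans (hf (N + 1).zero_le), hN⟩
    have hfirst := ih ((hf N.le_succ).trans hN)
    have hmass := mul_le_mul_of_nonneg_right (hδ N) measureReal_nonneg
      (a := J.real (Prod.fst ⁻¹' Ioc (f N) (f (N + 1))))
    rw [hunion, setIntegral_union hdisj hmeas hJ.integrable_snd_sub_fst.integrableOn
      hJ.integrable_snd_sub_fst.integrableOn, measureReal_union hdisj hmeas]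
    push_cast
    linarith [abs_add_le (∫ z in Prod.fst ⁻¹' Ioc (f 0) (f N), (z.2 - z.1) ∂J)
      (∫ z in Prod.fst ⁻¹' Ioc (f N) (f (N + 1)), (z.2 - z.1) ∂J)]

lemma abs_setIntegral_Ioc_le_nat (hJ : IsPredDist J) (hK : ValidClass K) {a b : ℝ}
    (ha : 0 ≤ a) (hab : a ≤ b) (hb : b ≤ 1) {N : ℕ} (hN : 0 < N) :
    |∫ z in Prod.fst ⁻¹' Ioc a b, (z.2 - z.1) ∂J| ≤ N * (CDL K J / 2) + 1 / N := by
  have := hJ.1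
  have hN' : (0:ℝ) < N := Nat.cast_pos.2 hN
  set f : ℕ → ℝ := fun i => a + i * ((b - a) / N)
  have hstep : 0 ≤ (b - a) / N := div_nonneg (sub_nonneg.2 hab) hN'.le
  have hf : Monotone f := fun i j hij => by
    simp only [f]; gcongr
  have hf0 : f 0 = a := by simp [f]
  have hfN : f N = b := by simp only [f]; field_simp; ring
  have h := abs_setIntegral_Ioc_le_of_monotone hJ hK hf (hf0 ▸ ha) (δ := (b - a) / N)
    (fun i => le_of_eq (by simp only [f]; push_cast; ring)) N (hfN ▸ hb)
  have hmass : (b - a) / N * J.real (Prod.fst ⁻¹' Ioc (f 0) (f N)) ≤ 1 / N := by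
    calc (b - a) / N * J.real (Prod.fst ⁻¹' Ioc (f 0) (f N)) ≤ (b - a) / N * 1 :=
          mul_le_mul_of_nonneg_left measureReal_le_one hstep
      _ ≤ 1 / N := by rw [mul_one]; gcongr; linarith
  rw [hf0, hfN] at h hmass
  linarith

lemma abs_setIntegral_Ioc_le_sqrt (hJ : IsPredDist J) (hK : ValidClass K) {a b : ℝ}
    (ha : 0 ≤ a) (hab : a ≤ b) (hb : b ≤ 1) :
    |∫ z in Prod.fst ⁻¹' Ioc a b, (z.2 - z.1) ∂J| ≤ 3 * √(CDL K J) := by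
  have hD₀ := CDL_nonneg hJ hK
  calc _ ≤ 3 * √(CDL K J / 2) :=
        le_three_mul_sqrt_of_forall_nat (by positivity) (by linarith [CDL_le_two hJ hK])
          fun N hN => abs_setIntegral_Ioc_le_nat hJ hK ha hab hb hN
    _ ≤ 3 * √(CDL K J) := by gcongr; linarith

lemma abs_setIntegral_singleton_le (hJ : IsPredDist J) (hK : ValidClass K) {v : ℝ}
    (hv : v ∈ Icc (0:ℝ) 1) :
    |∫ z in Prod.fst ⁻¹' {v}, (z.2 - z.1) ∂J| ≤ CDL K J / 2 := by
  have := hJ.1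
  set s : ℕ → Set (ℝ × ℝ) := fun n => Prod.fst ⁻¹' Ioc (v - 1 / (n + 1)) v
  have hs : Antitone s := fun m n hmn =>
    preimage_mono (Ioc_subset_Ioc_left (sub_le_sub_left (Nat.one_div_le_one_div hmn) v))
  have hlim := tendsto_setIntegral_of_antitone (fun n => measurable_fst measurableSet_Ioc) hs
    ⟨0, hJ.integrable_snd_sub_fst.integrableOn⟩
  rw [← preimage_iInter, iInter_Ioc_sub_one_div_add_one] at hlim
  have hbound :
      Tendsto (fun n : ℕ => CDL K J / 2 + 1 / ((n : ℝ) + 1)) atTop (𝓝 (CDL K J / 2)) := by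
    simpa using tendsto_const_nhds.add (tendsto_one_div_add_atTop_nhds_zero_nat (𝕜 := ℝ))
  refine le_of_tendsto_of_tendsto' hlim.abs hbound fun n => ?_
  refine (abs_setIntegral_Ioc_le hJ hK (sub_le_self _ Nat.one_div_pos_of_nat.le) hv).trans ?_
  rw [sub_sub_cancel]
  exact add_le_add_right
    (mul_le_of_le_one_right Nat.one_div_pos_of_nat.le (measureReal_le_one (μ := J))) _

lemma abs_setIntegral_le_of_subset_singleton (hJ : IsPredDist J) (hK : ValidClass K)
    {S : Set ℝ} {v : ℝ} (hS : S ⊆ {v}) (hv : v ∈ Icc (0:ℝ) 1) :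
    |∫ z in Prod.fst ⁻¹' S, (z.2 - z.1) ∂J| ≤ CDL K J / 2 := by
  rcases subset_singleton_iff_eq.1 hS with rfl | rfl
  · simpa using div_nonneg (CDL_nonneg hJ hK) zero_le_two
  · exact abs_setIntegral_singleton_le hJ hK hv

end PredictionDistribution

/-- interval-restricted calibration errors are bounded in absolute value
by `C·√(CDL_K(J))`, for every interval `I ⊆ [0,1]`. -/
theorem interval_CE_bound :
    ∃ C : ℝ, 0 < C ∧ ∀ (J : Measure (ℝ × ℝ)) (K : Set (ℝ → ℝ)),
      IsPredDist J → ValidClass K →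
      ∀ I : Set ℝ, I.OrdConnected → I ⊆ Icc (0:ℝ) 1 →
        |∫ z, I.indicator (fun _ => (1:ℝ)) z.1 * (z.2 - z.1) ∂J| ≤
          C * Real.sqrt (CDL K J) := by
  refine ⟨5, by norm_num, fun J K hJ hK I hI hI01 => ?_⟩
  rw [integral_indicator_fst_mul hI.measurableSet]
  rcases I.eq_empty_or_nonempty with rfl | hne
  · simp only [preimage_empty, Measure.restrict_empty, integral_zero_measure, abs_zero]
    positivity
  have hbb : BddBelow I := bddBelow_Icc.mono hI01
  have hba : BddAbove I := bddAbove_Icc.mono hI01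
  have ha : 0 ≤ sInf I := le_csInf hne fun x hx => (hI01 hx).1
  have hb : sSup I ≤ 1 := csSup_le hne fun x hx => (hI01 hx).2
  have hab : sInf I ≤ sSup I := csInf_le_csSup hne hbb hba
  have hIoc := abs_setIntegral_Ioc_le_sqrt hJ hK ha hab hb
  have hinf := abs_setIntegral_le_of_subset_singleton hJ hK (inter_subset_right (s := I))
    ⟨ha, hab.trans hb⟩
  have hsup := abs_setIntegral_le_of_subset_singleton hJ hK (sdiff_subset (t := I))
    ⟨ha.trans hab, hb⟩
  have hD : CDL K J ≤ 2 * √(CDL K J) := by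
    have hsq := Real.mul_self_sqrt (CDL_nonneg hJ hK)
    have : √(CDL K J) ≤ 2 := Real.sqrt_le_iff.2 ⟨zero_le_two, by linarith [CDL_le_two hJ hK]⟩
    nlinarith [Real.sqrt_nonneg (CDL K J)]
  rw [setIntegral_preimage_fst_ordConnected hJ.integrable_snd_sub_fst hI hne hbb hba]
  refine (abs_sub _ _).trans ?_
  linarith [abs_add_le (∫ z in Prod.fst ⁻¹' Ioc (sInf I) (sSup I), (z.2 - z.1) ∂J)
    (∫ z in Prod.fst ⁻¹' (I ∩ {sInf I}), (z.2 - z.1) ∂J)]
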